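/- Let Q be a parallelogram polyomino and Q' a sub-polyomino of Q that is also a parallelogram polyomino, and set P = Q ∖ Q' (a collection of cells). With the chain partition V_1, …, V_s of V(P) and the associated cell sets 𝒞_k, let a = min{i : V_i ∩ V(Q') ≠ ∅}, b = max{i : V_i ∩ V(Q') ≠ ∅}, Q_1 = ∪_{i < b} 𝒞_i and Q_2 = ∪_{i > a} 𝒞_i. Then I_{Q_1} + I_{Q_2} = I_P if and only if there is no inner interval of P that contains a cell of 𝒞_a and a cell of 𝒞_b. -/

import Mathlib

open MvPolynomial

universe u v

/-! ### Cells and collections of cells -/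

/-- A cell, identified by its lower-left corner: the cell `[a, a+(1,1)]`. -/
abbrev Cell : Type := ℕ × ℕ

/-- The four vertices (corners) of a cell. -/
def cellVertices (c : Cell) : Finset (ℕ × ℕ) :=
  {(c.1, c.2), (c.1 + 1, c.2), (c.1, c.2 + 1), (c.1 + 1, c.2 + 1)}

/-- The vertex set of a collection of cells. -/
def vertexSet (P : Finset Cell) : Finset (ℕ × ℕ) :=
  P.biUnion cellVertices

/-- Two cells share a common edge. -/
def AdjCells (c d : Cell) : Prop :=
  (c.1 = d.1 ∧ (c.2 + 1 = d.2 ∨ d.2 + 1 = c.2)) ∨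
    (c.2 = d.2 ∧ (c.1 + 1 = d.1 ∨ d.1 + 1 = c.1))

/-- A polyomino: a nonempty collection of cells with positive coordinates in which
any two cells are connected by a path of cells of the collection, consecutive
ones sharing an edge. -/
def IsPolyomino (P : Finset Cell) : Prop :=
  P.Nonempty ∧ (∀ c ∈ P, 1 ≤ c.1 ∧ 1 ≤ c.2) ∧
    ∀ c ∈ P, ∀ d ∈ P,
      Relation.ReflTransGen (fun x y => x ∈ P ∧ y ∈ P ∧ AdjCells x y) c d

/-- A collection of cells is simple if any two cells not in it are connected by a path
of cells not in it. -/
def IsSimple (P : Finset Cell) : Prop :=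
  ∀ c d : Cell, c ∉ P → d ∉ P →
    Relation.ReflTransGen (fun x y => x ∉ P ∧ y ∉ P ∧ AdjCells x y) c d

/-- A collection of cells is thin if it contains no 2×2 square of cells. -/
def IsThin (P : Finset Cell) : Prop :=
  ¬ ∃ c : Cell, c ∈ P ∧ (c.1 + 1, c.2) ∈ P ∧ (c.1, c.2 + 1) ∈ P ∧ (c.1 + 1, c.2 + 1) ∈ P

/-- The cell with lower-left corner `c` lies inside the interval `[u, w]`. -/
def CellInInterval (u w : ℕ × ℕ) (c : Cell) : Prop :=
  u.1 ≤ c.1 ∧ c.1 + 1 ≤ w.1 ∧ u.2 ≤ c.2 ∧ c.2 + 1 ≤ w.2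

/-- `[a, b]` is an inner interval of the collection of cells `P`:
it is a proper interval all of whose cells belong to `P`. -/
def IsInnerInterval (P : Finset Cell) (a b : ℕ × ℕ) : Prop :=
  a.1 < b.1 ∧ a.2 < b.2 ∧ ∀ c : Cell, CellInInterval a b c → c ∈ P

/-- A maximal inner interval of `P`. -/
def IsMaximalInnerInterval (P : Finset Cell) (a b : ℕ × ℕ) : Prop :=
  IsInnerInterval P a b ∧
    ∀ a' b' : ℕ × ℕ, IsInnerInterval P a' b' → a'.1 ≤ a.1 → a'.2 ≤ a.2 →
      b.1 ≤ b'.1 → b.2 ≤ b'.2 → a' = a ∧ b' = b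

/-! ### Convexity notions -/

def HorizontallyConvex (P : Finset Cell) : Prop :=
  ∀ i k j l : ℕ, (i, j) ∈ P → (k, j) ∈ P → i ≤ l → l ≤ k → (l, j) ∈ P

def VerticallyConvex (P : Finset Cell) : Prop :=
  ∀ i j k l : ℕ, (i, j) ∈ P → (i, k) ∈ P → j ≤ l → l ≤ k → (i, l) ∈ P

/-- A parallelogram polyomino: a convex polyomino whose vertex set is a sublattice of ℕ². -/
def IsParallelogram (P : Finset Cell) : Prop :=
  IsPolyomino P ∧ HorizontallyConvex P ∧ VerticallyConvex P ∧
    ∀ u ∈ vertexSet P, ∀ v ∈ vertexSet P,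
      (min u.1 v.1, min u.2 v.2) ∈ vertexSet P ∧ (max u.1 v.1, max u.2 v.2) ∈ vertexSet P

/-- `v` is a left-most vertex of `P`. -/
def IsLeftmost (P : Finset Cell) (v : ℕ × ℕ) : Prop :=
  v ∈ vertexSet P ∧ ∀ w ∈ vertexSet P, w.2 = v.2 → v.1 ≤ w.1

/-- A ladder polyomino: a horizontally convex polyomino each of whose left-most vertices,
except the lowest one, is the upper-left vertex of a cell of `P`. -/
def IsLadder (P : Finset Cell) : Prop :=
  IsPolyomino P ∧ HorizontallyConvex P ∧
    ∀ v : ℕ × ℕ, IsLeftmost P v →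
      (∀ w : ℕ × ℕ, IsLeftmost P w → v.2 ≤ w.2) ∨ (1 ≤ v.2 ∧ (v.1, v.2 - 1) ∈ P)

/-- The region of the plane covered by a collection of cells. -/
def spSet (P : Finset Cell) : Set (ℝ × ℝ) :=
  ⋃ c ∈ P, {x : ℝ × ℝ | (c.1 : ℝ) ≤ x.1 ∧ x.1 ≤ (c.1 : ℝ) + 1 ∧
      (c.2 : ℝ) ≤ x.2 ∧ x.2 ≤ (c.2 : ℝ) + 1}

/-- A ladder polyomino `P` is based on a polyomino `Q`:
`sp(P) ∩ sp(Q)` is the horizontal segment from `a₁` to `(b, a₁.2)` where `a₁` is the lowest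
left-most vertex of `P` and `b` is maximal with `(b, a₁.2) ∈ V(P)`. -/
def BasedOn (P Q : Finset Cell) : Prop :=
  ∃ a₁ : ℕ × ℕ, ∃ b : ℕ, IsLeftmost P a₁ ∧ (∀ w : ℕ × ℕ, IsLeftmost P w → a₁.2 ≤ w.2) ∧
    (b, a₁.2) ∈ vertexSet P ∧ (∀ v : ℕ, (v, a₁.2) ∈ vertexSet P → v ≤ b) ∧
    spSet P ∩ spSet Q =
      {x : ℝ × ℝ | (a₁.1 : ℝ) ≤ x.1 ∧ x.1 ≤ (b : ℝ) ∧ x.2 = (a₁.2 : ℝ)}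

/-! ### Closed and weakly closed paths -/

/-- A closed path polyomino. -/
def IsClosedPath (P : Finset Cell) : Prop :=
  ∃ (n : ℕ) (A : ℕ → Cell), 6 ≤ n ∧
    A n = A 0 ∧
    (∀ c : Cell, c ∈ P ↔ ∃ i < n, A i = c) ∧
    (∀ i j : ℕ, 1 ≤ i → i < j → j ≤ n → A i ≠ A j) ∧
    (∀ i < n, AdjCells (A i) (A (i + 1))) ∧
    (∀ i < n, ∀ j < n,
      ((j : ZMod n) ≠ (i : ZMod n) - 2 ∧ (j : ZMod n) ≠ (i : ZMod n) - 1 ∧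
       (j : ZMod n) ≠ (i : ZMod n) ∧ (j : ZMod n) ≠ (i : ZMod n) + 1 ∧
       (j : ZMod n) ≠ (i : ZMod n) + 2) →
      cellVertices (A i) ∩ cellVertices (A j) = ∅)

/-- A weakly closed path polyomino. -/
def IsWeaklyClosedPath (P : Finset Cell) : Prop :=
  ∃ (n : ℕ) (A : ℕ → Cell), 6 ≤ n ∧
    A n = A 0 ∧
    (∀ c : Cell, c ∈ P ↔ ∃ i < n, A i = c) ∧
    (∀ i j : ℕ, 1 ≤ i → i < j → j ≤ n → A i ≠ A j) ∧
    (cellVertices (A 0) ∩ cellVertices (A (n - 1))).card = 1 ∧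
    (∀ i : ℕ, i ≤ n - 2 → AdjCells (A i) (A (i + 1))) ∧
    (∀ i : ℕ, 1 ≤ i → i ≤ n → ∀ j : ℕ, 1 ≤ j → j ≤ n →
      ((j : ZMod n) ≠ (i : ZMod n) - 2 ∧ (j : ZMod n) ≠ (i : ZMod n) - 1 ∧
       (j : ZMod n) ≠ (i : ZMod n) ∧ (j : ZMod n) ≠ (i : ZMod n) + 1 ∧
       (j : ZMod n) ≠ (i : ZMod n) + 2) →
      cellVertices (A i) ∩ cellVertices (A j) = ∅)

/-! ### Polyomino ideals -/

/-- The polynomial ring `K[x_v : v ∈ V(P)]`. -/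
abbrev PolyRing (K : Type*) [Field K] (P : Finset Cell) : Type _ :=
  MvPolynomial {v : ℕ × ℕ // v ∈ vertexSet P} K

/-- The binomials attached to the inner intervals of a sub-collection `Q` of `P`,
viewed inside `K[x_v : v ∈ V(P)]`. -/
def innerIntervalBinomials (K : Type*) [Field K] (P Q : Finset Cell) :
    Set (PolyRing K P) :=
  {f | ∃ a b c d : {v : ℕ × ℕ // v ∈ vertexSet P},
      IsInnerInterval Q (a : ℕ × ℕ) (b : ℕ × ℕ) ∧
      (c : ℕ × ℕ) = ((a : ℕ × ℕ).1, (b : ℕ × ℕ).2) ∧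
      (d : ℕ × ℕ) = ((b : ℕ × ℕ).1, (a : ℕ × ℕ).2) ∧
      f = X a * X b - X c * X d}

/-- The ideal of inner 2-minors of a sub-collection `Q` of `P`, inside `K[x_v : v ∈ V(P)]`. -/
noncomputable def cellsIdeal (K : Type*) [Field K] (P Q : Finset Cell) : Ideal (PolyRing K P) :=
  Ideal.span (innerIntervalBinomials K P Q)

/-- The polyomino ideal `I_P`. -/
noncomputable def polyominoIdeal (K : Type*) [Field K] (P : Finset Cell) : Ideal (PolyRing K P) :=
  cellsIdeal K P P

/-! ### Monomial orders, initial monomials, Knutson ideals -/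

/-- `μ` is the initial (leading) monomial of `f` with respect to the strict
monomial-comparison relation `lt`. -/
def IsInitialMonomialRel {σ K : Type*} [CommSemiring K]
    (lt : (σ →₀ ℕ) → (σ →₀ ℕ) → Prop) (f : MvPolynomial σ K) (μ : σ →₀ ℕ) : Prop :=
  μ ∈ f.support ∧ ∀ ν ∈ f.support, ν ≠ μ → lt ν μ

/-- The strict comparison relation of a monomial order. -/
def monomialLT {σ : Type*} (m : MonomialOrder σ) (μ ν : σ →₀ ℕ) : Prop :=
  m.toSyn μ < m.toSyn ν

/-- A squarefree monomial exponent. -/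
def SquarefreeMonomial {σ : Type*} (μ : σ →₀ ℕ) : Prop := ∀ v, μ v ≤ 1

/-- The initial monomial of `f` with respect to `m` exists and is squarefree. -/
def HasSquarefreeInitial {σ K : Type*} [CommSemiring K] (m : MonomialOrder σ)
    (f : MvPolynomial σ K) : Prop :=
  ∃ μ, IsInitialMonomialRel (monomialLT m) f μ ∧ SquarefreeMonomial μ

/-- The family `C_f` of Knutson ideals associated to `f`: the smallest family of ideals
containing `(f)` and closed under colon ideals, sums and intersections. -/
inductive KnutsonClass {σ K : Type*} [Field K] (f : MvPolynomial σ K) :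
    Ideal (MvPolynomial σ K) → Prop
  | base : KnutsonClass f (Ideal.span {f})
  | colon (I J : Ideal (MvPolynomial σ K)) :
      KnutsonClass f I → KnutsonClass f (Submodule.colon I J)
  | add (I J : Ideal (MvPolynomial σ K)) :
      KnutsonClass f I → KnutsonClass f J → KnutsonClass f (I + J)
  | inter (I J : Ideal (MvPolynomial σ K)) :
      KnutsonClass f I → KnutsonClass f J → KnutsonClass f (I ⊓ J)

/-- An ideal is a Knutson ideal if it belongs to `C_f` for some `f` whose initial
monomial (with respect to some monomial order) is squarefree. -/
def IsKnutsonIdeal {σ : Type u} {K : Type*} [Field K] (I : Ideal (MvPolynomial σ K)) : Prop :=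
  ∃ (m : MonomialOrder.{u, u} σ) (f : MvPolynomial σ K),
    HasSquarefreeInitial m f ∧ KnutsonClass f I

/-! ### Height, unmixedness, homogeneity, König type -/

/-- The height of an ideal: the infimum of the heights of the primes containing it. -/
noncomputable def idealHeight {R : Type*} [CommRing R] (I : Ideal R) : ℕ∞ :=
  ⨅ (p : PrimeSpectrum R) (_ : I ≤ p.asIdeal), Order.height p

/-- An ideal is unmixed if all its associated primes have the same height. -/
def IsUnmixed {R : Type*} [CommRing R] (I : Ideal R) : Prop :=
  ∀ p q : Ideal R, IsAssociatedPrime p (R ⧸ I) → IsAssociatedPrime q (R ⧸ I) →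
    idealHeight p = idealHeight q

/-- A homogeneous ideal of a polynomial ring. -/
def IsHomogeneousIdeal {σ K : Type*} [CommSemiring K] (I : Ideal (MvPolynomial σ K)) : Prop :=
  ∀ f ∈ I, ∀ n : ℕ, MvPolynomial.homogeneousComponent n f ∈ I

/-- `I` is of König type with respect to the monomial order `m` and the polynomials
`f 0, …, f (h-1)`. -/
def IsKonigTypeWrt {σ K : Type*} [Field K] (m : MonomialOrder σ)
    (I : Ideal (MvPolynomial σ K)) (h : ℕ) (f : Fin h → MvPolynomial σ K) : Prop :=
  idealHeight I = (h : ℕ∞) ∧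
  Function.Injective f ∧
  (∃ G : Set (MvPolynomial σ K),
    (∀ g ∈ G, ∃ n : ℕ, MvPolynomial.IsHomogeneous g n) ∧
    Ideal.span G = I ∧
    (∀ g ∈ G, Ideal.span (G \ {g}) ≠ I) ∧
    ∀ i, f i ∈ G) ∧
  ∃ μ : Fin h → (σ →₀ ℕ),
    (∀ i, IsInitialMonomialRel (monomialLT m) (f i) (μ i)) ∧
    RingTheory.Sequence.IsRegular (MvPolynomial σ K)
      (List.ofFn fun i =>
        (MvPolynomial.monomial (μ i) (MvPolynomial.coeff (μ i) (f i)) : MvPolynomial σ K))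

/-- `I` is of König type. -/
def IsKonigType {σ : Type u} {K : Type*} [Field K] (I : Ideal (MvPolynomial σ K)) : Prop :=
  ∃ (m : MonomialOrder.{u, u} σ) (h : ℕ) (f : Fin h → MvPolynomial σ K), IsKonigTypeWrt m I h f

/-! ### The graded reverse lexicographic order used in the paper -/

/-- The variable order `x_{(i,j)} < x_{(k,l)}` iff `i < k`, or `i = k` and `j < l`. -/
def VarLT (u v : ℕ × ℕ) : Prop := u.1 < v.1 ∨ (u.1 = v.1 ∧ u.2 < v.2)

/-- The strict graded reverse lexicographic comparison of exponent vectors, where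
variables are embedded into ℕ² and ordered by `VarLT`. -/
def GrevlexLT {σ : Type*} (emb : σ → ℕ × ℕ) (μ ν : σ →₀ ℕ) : Prop :=
  (μ.sum fun _ e => e) < (ν.sum fun _ e => e) ∨
    ((μ.sum fun _ e => e) = (ν.sum fun _ e => e) ∧
      ∃ v, ν v < μ v ∧ ∀ w, VarLT (emb w) (emb v) → μ w = ν w)

/-- The initial ideal of `I` with respect to the relation `lt`. -/
noncomputable def initialIdealRel {σ K : Type*} [Field K] (lt : (σ →₀ ℕ) → (σ →₀ ℕ) → Prop)
    (I : Ideal (MvPolynomial σ K)) : Ideal (MvPolynomial σ K) :=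
  Ideal.span {g | ∃ f ∈ I, ∃ μ, IsInitialMonomialRel lt f μ ∧
    g = MvPolynomial.monomial μ (1 : K)}

/-- `G` is a Gröbner basis of `I` with respect to the relation `lt`. -/
def IsGroebnerBasisRel {σ K : Type*} [Field K] (lt : (σ →₀ ℕ) → (σ →₀ ℕ) → Prop)
    (G : Set (MvPolynomial σ K)) (I : Ideal (MvPolynomial σ K)) : Prop :=
  (∀ g ∈ G, g ≠ 0 ∧ g ∈ I) ∧
    Ideal.span {g | ∃ f ∈ G, ∃ μ, IsInitialMonomialRel lt f μ ∧
      g = MvPolynomial.monomial μ (1 : K)} = initialIdealRel lt I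

/-! ### Anti-diagonal chains of vertices and the associated determinants -/

/-- The vertices `v_{k,l} = (i+l, j+n+1-l)`, `1 ≤ l ≤ n`, of an anti-diagonal chain. -/
def chainVerts (i j n : ℕ) : Finset (ℕ × ℕ) :=
  (Finset.Icc 1 n).image fun l => (i + l, j + n + 1 - l)

/-- The cells whose anti-diagonal vertices are consecutive vertices of the chain. -/
def chainCells (i j n : ℕ) : Finset Cell :=
  (Finset.Icc 1 (n - 1)).image fun l => (i + l, j + n - l)

/-- The chain starting at `(i+1, j+n)` of length `n` is a maximal successor-chain in `P`. -/
def IsDiagChain (P : Finset Cell) (i j n : ℕ) : Prop :=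
  1 ≤ n ∧
  (∀ l : ℕ, 1 ≤ l → l ≤ n → (i + l, j + n + 1 - l) ∈ vertexSet P) ∧
  (∀ l : ℕ, 1 ≤ l → l ≤ n - 1 → (i + l, j + n - l) ∈ P) ∧
  (i, j + n) ∉ P ∧
  (i + n, j) ∉ P

/-- The data `c k = (i_k, j_k, n_k)`, `k : Fin s`, is the chain partition of `V(P)`. -/
def IsDiagChainPartition (P : Finset Cell) (s : ℕ) (c : Fin s → ℕ × ℕ × ℕ) : Prop :=
  (∀ k, IsDiagChain P (c k).1 (c k).2.1 (c k).2.2) ∧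
  (∀ k l, k ≠ l →
    Disjoint (chainVerts (c k).1 (c k).2.1 (c k).2.2)
      (chainVerts (c l).1 (c l).2.1 (c l).2.2)) ∧
  (Finset.univ.biUnion (fun k => chainVerts (c k).1 (c k).2.1 (c k).2.2) = vertexSet P) ∧
  (∀ k l : Fin s, k < l →
    ((c k).1 + 1) + ((c k).2.1 + (c k).2.2) < ((c l).1 + 1) + ((c l).2.1 + (c l).2.2) ∨
    (((c k).1 + 1) + ((c k).2.1 + (c k).2.2) = ((c l).1 + 1) + ((c l).2.1 + (c l).2.2) ∧
      (c k).1 + 1 < (c l).1 + 1))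

/-- The determinant `f_k` of the matrix `M_k` associated to a chain: the `(a,b)` entry is
`x_{(i+a, j+b)}` if `(i+a, j+b) ∈ V(P)` and `0` otherwise (`1 ≤ a, b ≤ n`). -/
noncomputable def chainDet (K : Type*) [Field K] (P : Finset Cell) (i j n : ℕ) :
    PolyRing K P :=
  Matrix.det (Matrix.of fun a b : Fin n =>
    if h : (i + (a : ℕ) + 1, j + (b : ℕ) + 1) ∈ vertexSet P then
      (X ⟨(i + (a : ℕ) + 1, j + (b : ℕ) + 1), h⟩ : PolyRing K P) else 0)

/-- The exponent vector of the squarefree monomial `∏_{v ∈ V} x_v` inside `K[x_v : v ∈ V(P)]`. -/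
noncomputable def vertexMonomial (P : Finset Cell) (V : Finset (ℕ × ℕ)) :
    {v : ℕ × ℕ // v ∈ vertexSet P} →₀ ℕ :=
  ∑ v ∈ Finset.filter (fun v : {v : ℕ × ℕ // v ∈ vertexSet P} => (v : ℕ × ℕ) ∈ V)
      (vertexSet P).attach, Finsupp.single v 1

/-! ### The conditions (C1), (C2), (C3) on thin collections of cells -/

/-- (C1): `P` contains no three cells with upper-left vertices
`(i,j), (i+1,j-1), (i+2,j-2)`. -/
def CondC1 (P : Finset Cell) : Prop :=
  ¬ ∃ i m : ℕ, (i, m + 2) ∈ P ∧ (i + 1, m + 1) ∈ P ∧ (i + 2, m) ∈ P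

/-- (C2): for a vertical maximal inner interval `[a, b]` of width one, neither the cell
with lower-right vertex `(a.1, b.2)` nor the cell with upper-left vertex `(a.1+1, a.2)`
belongs to `P`. -/
def CondC2 (P : Finset Cell) : Prop :=
  ∀ a b : ℕ × ℕ, IsMaximalInnerInterval P a b → b.1 = a.1 + 1 →
    (1 ≤ a.1 → (a.1 - 1, b.2) ∉ P) ∧ (1 ≤ a.2 → (a.1 + 1, a.2 - 1) ∉ P)

/-- (C3): for a horizontal maximal inner interval `[a, b]` of height one, neither the cell
with lower-right vertex `(a.1, a.2+1)` nor the cell with upper-left vertex `(b.1, a.2)`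
belongs to `P`. -/
def CondC3 (P : Finset Cell) : Prop :=
  ∀ a b : ℕ × ℕ, IsMaximalInnerInterval P a b → b.2 = a.2 + 1 →
    (1 ≤ a.1 → (a.1 - 1, a.2 + 1) ∉ P) ∧ (1 ≤ a.2 → (b.1, a.2 - 1) ∉ P)


/-!
Both `I_{Q₁}` and `I_{Q₂}` lie in `I_P`, so the equality holds iff every inner interval of `P`
is an inner interval of `Q₁` or of `Q₂`: the binomial of any other inner interval `[u, w]`
survives evaluation at the indicator function of `{u, w}`, which kills `I_{Q₁} + I_{Q₂}`.
An inner interval lying in neither `Q₁` nor `Q₂` contains a cell of a chain `k₁ ≤ a` and a cell of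
a chain `k₂ ≥ b`, and it remains to see that it then contains cells of `𝒞_a` and of `𝒞_b`.

The anti-diagonals of the parallelogram `Q` are segments, so a chain of `P` sitting on an
anti-diagonal at distance at most one from the anti-diagonals occupied by `Q'` meets `V(Q')`.
Hence if `k₁ < a`, the chain `k₁` lies strictly below the anti-diagonal `τ - 1` just under the
lowest one `τ` of `Q'`, and the interval crosses `τ - 1`. The chain of `P` on `τ - 1` passes through
the lower-left corner of every cell of `Q'` on `τ`; since `V_a` also contains such a corner, that
chain is `V_a`. Symmetrically for `b`, above `Q'`.
-/

lemma Relation.ReflTransGen.exists_step_of_not {α : Type*} {r : α → α → Prop} {p : α → Prop}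
    {a b : α} (h : Relation.ReflTransGen r a b) (ha : p a) (hb : ¬ p b) :
    ∃ x y, r x y ∧ p x ∧ ¬ p y := by
  by_contra! H
  induction h with
  | refl => exact hb ha
  | tail _ hxy ih => exact hb (H _ _ hxy (not_not.1 ih))

lemma mem_vertexSet_iff {P : Finset Cell} {v : ℕ × ℕ} :
    v ∈ vertexSet P ↔ ∃ e ∈ P, (e.1 = v.1 ∨ e.1 + 1 = v.1) ∧ (e.2 = v.2 ∨ e.2 + 1 = v.2) := by
  unfold vertexSet cellVertices
  simp only [Finset.mem_biUnion, Finset.mem_insert, Finset.mem_singleton, Prod.ext_iff]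
  refine exists_congr fun e => and_congr_right fun _ => ?_
  omega

namespace IsPolyomino

variable {F : Finset Cell}

lemma exists_mem_of_column_between (hF : IsPolyomino F) {c d : Cell} (hc : c ∈ F)
    (hd : d ∈ F) {z : ℕ} (hcz : c.1 ≤ z) (hzd : z ≤ d.1) : ∃ y, (z, y) ∈ F := by
  rcases hcz.eq_or_lt with rfl | hcz
  · exact ⟨c.2, hc⟩
  obtain ⟨⟨p₁, p₂⟩, ⟨q₁, q₂⟩, ⟨-, hq, hpq⟩, hp, hq'⟩ :=
    (hF.2.2 c hc d hd).exists_step_of_not (p := fun e : Cell => e.1 < z) hcz (by simpa using hzd)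
  dsimp only [AdjCells] at hpq hp hq'
  obtain rfl : q₁ = z := by omega
  exact ⟨q₂, hq⟩

lemma exists_row_of_adjacent_columns (hF : IsPolyomino F) {x y y' : ℕ} (h : (x, y) ∈ F)
    (h' : (x + 1, y') ∈ F) : ∃ z, (x, z) ∈ F ∧ (x + 1, z) ∈ F := by
  obtain ⟨⟨p₁, p₂⟩, ⟨q₁, q₂⟩, ⟨hp, hq, hpq⟩, hpx, hqx⟩ :=
    (hF.2.2 _ h _ h').exists_step_of_not (p := fun e : Cell => e.1 ≤ x) le_rfl (by simp)
  dsimp only [AdjCells] at hpq hpx hqx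
  obtain ⟨rfl, rfl, rfl⟩ : p₁ = x ∧ q₁ = x + 1 ∧ q₂ = p₂ := by omega
  exact ⟨_, hp, hq⟩

end IsPolyomino

namespace IsParallelogram

variable {F : Finset Cell}

lemma exists_le_of_mem_succ_column (hF : IsParallelogram F) {x y₀ y' : ℕ} (h : (x, y₀) ∈ F)
    (h' : (x + 1, y') ∈ F) : ∃ y ≤ y', (x, y) ∈ F := by
  by_contra! hlo
  have hy' : y' < y₀ := by
    by_contra! hy
    exact hlo y₀ hy h
  -- the meet `(x, y')` of two lower-left corners is a vertex
  have hv := (hF.2.2.2 (x, y₀) (mem_vertexSet_iff.2 ⟨_, h, Or.inl rfl, Or.inl rfl⟩)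
    (x + 1, y') (mem_vertexSet_iff.2 ⟨_, h', Or.inl rfl, Or.inl rfl⟩)).1
  rw [min_eq_left (by omega), min_eq_right hy'.le] at hv
  obtain ⟨⟨e₁, e₂⟩, he, h1, h2⟩ := mem_vertexSet_iff.1 hv
  dsimp only at h1 h2
  rcases h1 with rfl | rfl
  · exact hlo e₂ (by omega) he
  · obtain ⟨z, hz, hz'⟩ := hF.1.exists_row_of_adjacent_columns he h
    have hzy : y' < z := by
      by_contra! hzy
      exact hlo z hzy hz'
    have hrow : (e₁, y') ∈ F := hF.2.2.1 _ _ _ _ he hz (by omega) hzy.le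
    exact hlo y' le_rfl (hF.2.1 _ _ _ _ hrow h' (by omega) (by omega))

lemma exists_ge_of_mem_pred_column (hF : IsParallelogram F) {x y₀ y' : ℕ} (h : (x, y₀) ∈ F)
    (h' : (x + 1, y') ∈ F) : ∃ y, y₀ ≤ y ∧ (x + 1, y) ∈ F := by
  by_contra! hhi
  have hy' : y' < y₀ := by
    by_contra! hy
    exact hhi y' hy h'
  -- the join `(x + 2, y₀ + 1)` of two upper-right corners is a vertex
  have hv := (hF.2.2.2 (x + 1, y₀ + 1) (mem_vertexSet_iff.2 ⟨_, h, Or.inr rfl, Or.inr rfl⟩)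
    (x + 1 + 1, y' + 1) (mem_vertexSet_iff.2 ⟨_, h', Or.inr rfl, Or.inr rfl⟩)).2
  rw [max_eq_right (by omega), max_eq_left (by omega)] at hv
  obtain ⟨⟨e₁, e₂⟩, he, h1, h2⟩ := mem_vertexSet_iff.1 hv
  dsimp only at h1 h2
  rcases h1 with rfl | h1
  · obtain ⟨z, hz, hz'⟩ := hF.1.exists_row_of_adjacent_columns h' he
    have hzy : z < y₀ := by
      by_contra! hzy
      exact hhi z hzy hz
    have hcol : (x + 1 + 1, y₀) ∈ F := hF.2.2.1 _ _ _ _ hz' he hzy.le (by omega)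
    exact hhi y₀ le_rfl (hF.2.1 _ _ _ _ h hcol (by omega) (by omega))
  · obtain rfl : e₁ = x + 1 := by omega
    exact hhi e₂ (by omega) he

lemma exists_le_of_column_le (hF : IsParallelogram F) {x y z w₀ : ℕ} (h : (x, y) ∈ F)
    (hz : (z, w₀) ∈ F) (hzx : z ≤ x) : ∃ w ≤ y, (z, w) ∈ F := by
  induction x, hzx using Nat.le_induction generalizing y with
  | base => exact ⟨y, le_rfl, h⟩
  | succ x hzx ih =>
    obtain ⟨y₁, hy₁⟩ := hF.1.exists_mem_of_column_between hz h hzx (Nat.le_succ x)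
    obtain ⟨w', hw', hw'F⟩ := hF.exists_le_of_mem_succ_column hy₁ h
    obtain ⟨w, hw, hwF⟩ := ih hw'F
    exact ⟨w, hw.trans hw', hwF⟩

lemma exists_ge_of_column_ge (hF : IsParallelogram F) {x y z w₀ : ℕ} (h : (x, y) ∈ F)
    (hz : (z, w₀) ∈ F) (hxz : x ≤ z) : ∃ w, y ≤ w ∧ (z, w) ∈ F := by
  induction z, hxz using Nat.le_induction generalizing w₀ with
  | base => exact ⟨y, le_rfl, h⟩
  | succ z hxz ih =>
    obtain ⟨y₁, hy₁⟩ := hF.1.exists_mem_of_column_between h hz hxz (Nat.le_succ z)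
    obtain ⟨w', hw', hw'F⟩ := ih hy₁
    obtain ⟨w, hw, hwF⟩ := hF.exists_ge_of_mem_pred_column hw'F hz
    exact ⟨w, hw'.trans hw, hwF⟩

lemma mem_between_of_level_eq (hF : IsParallelogram F) {x y x' y' z : ℕ} (h : (x, y) ∈ F)
    (h' : (x', y') ∈ F) (hlvl : x + y = x' + y') (hxz : x ≤ z) (hzx' : z ≤ x') :
    (z, x + y - z) ∈ F := by
  obtain ⟨w₀, hw₀⟩ := hF.1.exists_mem_of_column_between h h' hxz hzx'
  obtain ⟨w₁, hw₁, hw₁F⟩ := hF.exists_ge_of_column_ge h hw₀ hxz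
  obtain ⟨w₂, hw₂, hw₂F⟩ := hF.exists_le_of_column_le h' hw₀ hzx'
  exact hF.2.2.1 _ _ _ _ hw₂F hw₁F (by omega) (by omega)

lemma left_or_below_mem (hF : IsParallelogram F) {x y x' y' : ℕ} (h : (x, y) ∈ F)
    (h' : (x', y') ∈ F) (hlt : x' + y' < x + y) : (x - 1, y) ∈ F ∨ (x, y - 1) ∈ F := by
  rcases le_or_gt x x' with hxx' | hx'x
  · obtain ⟨w, hw, hwF⟩ := hF.exists_le_of_column_le h' h hxx'
    exact Or.inr (hF.2.2.1 _ _ _ _ hwF h (by omega) (by omega))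
  · obtain ⟨w₀, hw₀⟩ := hF.1.exists_mem_of_column_between h' h (z := x - 1) (by omega)
      (Nat.sub_le x 1)
    have hx : (x - 1 + 1, y) ∈ F := by rwa [Nat.sub_add_cancel (by omega)]
    obtain ⟨w, hw, hwF⟩ := hF.exists_le_of_mem_succ_column hw₀ hx
    obtain ⟨z, hz, hz'⟩ := hF.1.exists_row_of_adjacent_columns hw₀ hx
    rw [Nat.sub_add_cancel (by omega)] at hz'
    rcases le_or_gt y z with hyz | hzy
    · exact Or.inl (hF.2.2.1 _ _ _ _ hwF hz hw hyz)
    · exact Or.inr (hF.2.2.1 _ _ _ _ hz' h (by omega) (by omega))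

lemma right_or_above_mem (hF : IsParallelogram F) {x y x' y' : ℕ} (h : (x, y) ∈ F)
    (h' : (x', y') ∈ F) (hlt : x + y < x' + y') : (x + 1, y) ∈ F ∨ (x, y + 1) ∈ F := by
  rcases le_or_gt x' x with hx'x | hxx'
  · obtain ⟨w, hw, hwF⟩ := hF.exists_ge_of_column_ge h' h hx'x
    exact Or.inr (hF.2.2.1 _ _ _ _ h hwF (by omega) (by omega))
  · obtain ⟨w₀, hw₀⟩ := hF.1.exists_mem_of_column_between h h' (z := x + 1) (by simp) hxx'
    obtain ⟨w, hw, hwF⟩ := hF.exists_ge_of_mem_pred_column h hw₀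
    obtain ⟨z, hz, hz'⟩ := hF.1.exists_row_of_adjacent_columns h hw₀
    rcases le_or_gt z y with hzy | hyz
    · exact Or.inl (hF.2.2.1 _ _ _ _ hz' hwF hzy hw)
    · exact Or.inr (hF.2.2.1 _ _ _ _ h hz (by omega) (by omega))

lemma exists_mem_level (hF : IsParallelogram F) {x y x' y' t : ℕ} (h : (x, y) ∈ F)
    (h' : (x', y') ∈ F) (ht : x + y ≤ t) (ht' : t ≤ x' + y') : ∃ e ∈ F, e.1 + e.2 = t := by
  induction hn : x' + y' - t generalizing x' y' with
  | zero => exact ⟨_, h', by dsimp only; omega⟩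
  | succ n ih =>
    have hpos := hF.1.2.1 _ h'
    dsimp only at hpos
    rcases hF.left_or_below_mem h' h (by omega) with h'' | h'' <;>
    exact ih h'' (by omega) (by omega)

end IsParallelogram

lemma mem_chainVerts {i j n : ℕ} {v : ℕ × ℕ} :
    v ∈ chainVerts i j n ↔ i + 1 ≤ v.1 ∧ v.1 ≤ i + n ∧ v.1 + v.2 = i + j + n + 1 := by
  simp only [chainVerts, Finset.mem_image, Finset.mem_Icc]
  constructor
  · rintro ⟨l, hl, rfl⟩
    dsimp only
    omega
  · rintro ⟨h1, h2, h3⟩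
    exact ⟨v.1 - i, by omega, Prod.ext (by dsimp only; omega) (by dsimp only; omega)⟩

lemma mem_chainCells {i j n : ℕ} {e : Cell} :
    e ∈ chainCells i j n ↔ i + 1 ≤ e.1 ∧ e.1 + 1 ≤ i + n ∧ e.1 + e.2 = i + j + n := by
  simp only [chainCells, Finset.mem_image, Finset.mem_Icc]
  constructor
  · rintro ⟨l, hl, rfl⟩
    dsimp only
    omega
  · rintro ⟨h1, h2, h3⟩
    exact ⟨e.1 - i, by omega, Prod.ext (by dsimp only; omega) (by dsimp only; omega)⟩

lemma mem_of_mem_vertexSet_of_le_level {F : Finset Cell} {t : ℕ} (hmin : ∀ g ∈ F, t ≤ g.1 + g.2)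
    {v : ℕ × ℕ} (hv : v ∈ vertexSet F) (hvt : v.1 + v.2 = t) : v ∈ F := by
  obtain ⟨e, he, h1, h2⟩ := mem_vertexSet_iff.1 hv
  have := hmin e he
  obtain rfl : e = v := Prod.ext (by omega) (by omega)
  exact he

lemma exists_mem_of_mem_vertexSet_of_level_le {F : Finset Cell} {t : ℕ}
    (hmax : ∀ g ∈ F, g.1 + g.2 ≤ t) {v : ℕ × ℕ} (hv : v ∈ vertexSet F) (hvt : v.1 + v.2 = t + 2) :
    ∃ g ∈ F, g.1 + g.2 = t ∧ (g.1 + 1, g.2 + 1) = v := by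
  obtain ⟨e, he, h1, h2⟩ := mem_vertexSet_iff.1 hv
  have := hmax e he
  exact ⟨e, he, by omega, Prod.ext (by omega) (by omega)⟩

lemma level_bounds_of_meets {Q' : Finset Cell} {i j n : ℕ}
    (hmeet : (chainVerts i j n ∩ vertexSet Q').Nonempty) {q₁ q₂ : Cell}
    (hmin : ∀ g ∈ Q', q₁.1 + q₁.2 ≤ g.1 + g.2) (hmax : ∀ g ∈ Q', g.1 + g.2 ≤ q₂.1 + q₂.2) :
    q₁.1 + q₁.2 ≤ i + j + n + 1 ∧ i + j + n ≤ q₂.1 + q₂.2 + 1 := by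
  obtain ⟨v, hv⟩ := hmeet
  obtain ⟨hvc, hvQ'⟩ := Finset.mem_inter.1 hv
  obtain ⟨g, hg, h1, h2⟩ := mem_vertexSet_iff.1 hvQ'
  have := (mem_chainVerts.1 hvc).2.2
  have := hmin g hg
  have := hmax g hg
  omega

namespace IsDiagChain

variable {Q Q' : Finset Cell} {i j n : ℕ}

lemma mem_of_mem_chainCells {P : Finset Cell} (hch : IsDiagChain P i j n) {e : Cell}
    (he : e ∈ chainCells i j n) : e ∈ P := by
  obtain ⟨l, hl, rfl⟩ := Finset.mem_image.1 he
  exact hch.2.2.1 l (Finset.mem_Icc.1 hl).1 (Finset.mem_Icc.1 hl).2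

/-- The cell just beyond an end of the chain lies in `Q` because the anti-diagonals of `Q` are
segments, and outside `Q \ Q'` because the chain is maximal. -/
lemma exists_blocking_cell (hQ : IsParallelogram Q) (hch : IsDiagChain (Q \ Q') i j n)
    {e f : Cell} (he : e ∈ chainCells i j n) (hf : f ∈ Q) (hlvl : f.1 + f.2 = e.1 + e.2)
    (hfe : f ∉ chainCells i j n) :
    ∃ g ∈ Q', g.1 + g.2 = e.1 + e.2 ∧ (chainVerts i j n ∩ vertexSet Q').Nonempty := by
  obtain ⟨he1, he2, he3⟩ := mem_chainCells.1 he
  have heQ := (Finset.mem_sdiff.1 (hch.mem_of_mem_chainCells he)).1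
  have hout : f.1 ≤ i ∨ i + n ≤ f.1 := by
    by_contra! hin
    exact hfe (mem_chainCells.2 ⟨by omega, by omega, by omega⟩)
  rcases hout with hfi | hfi
  · have hgQ : (i, j + n) ∈ Q := by
      have := hQ.mem_between_of_level_eq hf heQ hlvl hfi (by omega)
      rwa [show f.1 + f.2 - i = j + n by omega] at this
    have hgQ' : (i, j + n) ∈ Q' := by
      by_contra hg
      exact hch.2.2.2.1 (Finset.mem_sdiff.2 ⟨hgQ, hg⟩)
    refine ⟨_, hgQ', by dsimp only; omega, (i + 1, j + n), Finset.mem_inter.2 ⟨?_, ?_⟩⟩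
    · exact mem_chainVerts.2 ⟨le_rfl, by omega, by omega⟩
    · exact mem_vertexSet_iff.2 ⟨_, hgQ', Or.inr rfl, Or.inl rfl⟩
  · have hgQ : (i + n, j) ∈ Q := by
      have := hQ.mem_between_of_level_eq heQ hf hlvl.symm (by omega) hfi
      rwa [show e.1 + e.2 - (i + n) = j by omega] at this
    have hgQ' : (i + n, j) ∈ Q' := by
      by_contra hg
      exact hch.2.2.2.2 (Finset.mem_sdiff.2 ⟨hgQ, hg⟩)
    refine ⟨_, hgQ', by dsimp only; omega, (i + n, j + 1), Finset.mem_inter.2 ⟨?_, ?_⟩⟩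
    · exact mem_chainVerts.2 ⟨by omega, le_rfl, by omega⟩
    · exact mem_vertexSet_iff.2 ⟨_, hgQ', Or.inl rfl, Or.inr rfl⟩

lemma mem_chainCells_of_level_eq (hQ : IsParallelogram Q) (hch : IsDiagChain (Q \ Q') i j n)
    {e f : Cell} (he : e ∈ chainCells i j n) (hf : f ∈ Q) (hlvl : f.1 + f.2 = e.1 + e.2)
    (hfree : ∀ g ∈ Q', g.1 + g.2 ≠ e.1 + e.2) : f ∈ chainCells i j n := by
  by_contra hfe
  obtain ⟨g, hg, hglvl, -⟩ := hch.exists_blocking_cell hQ he hf hlvl hfe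
  exact hfree g hg hglvl

lemma meets_of_level_eq (hQ : IsParallelogram Q) (hsub : Q' ⊆ Q)
    (hch : IsDiagChain (Q \ Q') i j n) {e f : Cell} (he : e ∈ chainCells i j n) (hf : f ∈ Q')
    (hlvl : f.1 + f.2 = e.1 + e.2) : (chainVerts i j n ∩ vertexSet Q').Nonempty := by
  refine (hch.exists_blocking_cell hQ he (hsub hf) hlvl fun hfe => ?_).elim fun _ h => h.2.2
  exact (Finset.mem_sdiff.1 (hch.mem_of_mem_chainCells hfe)).2 hf
lemma mem_chainVerts_of_min_level (hQ : IsParallelogram Q) (hsub : Q' ⊆ Q)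
    (hch : IsDiagChain (Q \ Q') i j n) {t : ℕ} (hmin : ∀ g ∈ Q', t ≤ g.1 + g.2) {e q : Cell}
    (he : e ∈ chainCells i j n) (het : e.1 + e.2 + 1 = t) (hq : q ∈ Q') (hqt : q.1 + q.2 = t) :
    q ∈ chainVerts i j n := by
  have heQ := (Finset.mem_sdiff.1 (hch.mem_of_mem_chainCells he)).1
  have hpos := hQ.1.2.1 q (hsub hq)
  have hfree : ∀ g ∈ Q', g.1 + g.2 ≠ e.1 + e.2 := fun g hg => by
    have := hmin g hg
    omega
  rcases hQ.left_or_below_mem (hsub hq) heQ (by omega) with hf | hf <;>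
  · have := mem_chainCells.1 (hch.mem_chainCells_of_level_eq hQ he hf (by dsimp only; omega) hfree)
    exact mem_chainVerts.2 (by dsimp only at this; omega)

lemma mem_chainVerts_of_max_level (hQ : IsParallelogram Q) (hsub : Q' ⊆ Q)
    (hch : IsDiagChain (Q \ Q') i j n) {t : ℕ} (hmax : ∀ g ∈ Q', g.1 + g.2 ≤ t) {e q : Cell}
    (he : e ∈ chainCells i j n) (het : e.1 + e.2 = t + 1) (hq : q ∈ Q') (hqt : q.1 + q.2 = t) :
    (q.1 + 1, q.2 + 1) ∈ chainVerts i j n := by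
  have heQ := (Finset.mem_sdiff.1 (hch.mem_of_mem_chainCells he)).1
  have hfree : ∀ g ∈ Q', g.1 + g.2 ≠ e.1 + e.2 := fun g hg => by
    have := hmax g hg
    omega
  rcases hQ.right_or_above_mem (hsub hq) heQ (by omega) with hf | hf <;>
  · have := mem_chainCells.1 (hch.mem_chainCells_of_level_eq hQ he hf (by dsimp only; omega) hfree)
    exact mem_chainVerts.2 (by dsimp only at this ⊢; omega)

lemma meets_of_level_near (hQ : IsParallelogram Q) (hQ' : IsParallelogram Q') (hsub : Q' ⊆ Q)
    (hch : IsDiagChain (Q \ Q') i j n) {q₁ q₂ : Cell} (hq₁ : q₁ ∈ Q')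
    (hmin : ∀ g ∈ Q', q₁.1 + q₁.2 ≤ g.1 + g.2) (hq₂ : q₂ ∈ Q')
    (hmax : ∀ g ∈ Q', g.1 + g.2 ≤ q₂.1 + q₂.2) {e : Cell} (he : e ∈ chainCells i j n)
    (h₁ : q₁.1 + q₁.2 ≤ e.1 + e.2 + 1) (h₂ : e.1 + e.2 ≤ q₂.1 + q₂.2 + 1) :
    (chainVerts i j n ∩ vertexSet Q').Nonempty := by
  rcases h₁.eq_or_lt with h₁ | h₁
  · refine ⟨q₁, Finset.mem_inter.2 ⟨?_, mem_vertexSet_iff.2 ⟨q₁, hq₁, Or.inl rfl, Or.inl rfl⟩⟩⟩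
    exact hch.mem_chainVerts_of_min_level hQ hsub hmin he h₁.symm hq₁ rfl
  rcases h₂.eq_or_lt with h₂ | h₂
  · refine ⟨(q₂.1 + 1, q₂.2 + 1),
      Finset.mem_inter.2 ⟨?_, mem_vertexSet_iff.2 ⟨q₂, hq₂, Or.inr rfl, Or.inr rfl⟩⟩⟩
    exact hch.mem_chainVerts_of_max_level hQ hsub hmax he h₂ hq₂ rfl
  obtain ⟨g, hg, hglvl⟩ := hQ'.exists_mem_level hq₁ hq₂ (t := e.1 + e.2) (by omega) (by omega)
  exact hch.meets_of_level_eq hQ hsub he hg hglvl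

end IsDiagChain

/-- The chain `V_k` of the partition `c`. -/
abbrev chainVertsOf {s : ℕ} (c : Fin s → ℕ × ℕ × ℕ) (k : Fin s) : Finset (ℕ × ℕ) :=
  chainVerts (c k).1 (c k).2.1 (c k).2.2

/-- The cells `𝒞_k` of the chain `V_k`. -/
abbrev chainCellsOf {s : ℕ} (c : Fin s → ℕ × ℕ × ℕ) (k : Fin s) : Finset Cell :=
  chainCells (c k).1 (c k).2.1 (c k).2.2

/-- The paper's `Q₁` and `Q₂` are `chainUnion c (· < b)` and `chainUnion c (a < ·)`. -/
def chainUnion {s : ℕ} (c : Fin s → ℕ × ℕ × ℕ) (p : Fin s → Prop) [DecidablePred p] :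
    Finset Cell :=
  (Finset.univ.filter p).biUnion (chainCellsOf c)

namespace IsDiagChainPartition

variable {P : Finset Cell} {s : ℕ} {c : Fin s → ℕ × ℕ × ℕ}

lemma exists_mem_chainCellsOf (hpart : IsDiagChainPartition P s c) {e : Cell} (he : e ∈ P) :
    ∃ k, e ∈ chainCellsOf c k := by
  have hv : (e.1, e.2 + 1) ∈ vertexSet P := mem_vertexSet_iff.2 ⟨e, he, Or.inl rfl, Or.inr rfl⟩
  rw [← hpart.2.2.1, Finset.mem_biUnion] at hv
  obtain ⟨k, -, hk⟩ := hv
  obtain ⟨h1, h2, h3⟩ := mem_chainVerts.1 hk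
  refine ⟨k, mem_chainCells.2 ⟨h1, ?_, by dsimp only at h3; omega⟩⟩
  by_contra! hlast
  apply (hpart.1 k).2.2.2.2
  convert he using 1
  ext <;> dsimp only at * <;> omega

lemma eq_of_mem_chainVertsOf (hpart : IsDiagChainPartition P s c) {k l : Fin s} {v : ℕ × ℕ}
    (hk : v ∈ chainVertsOf c k) (hl : v ∈ chainVertsOf c l) : k = l := by
  by_contra hne
  exact Finset.disjoint_left.1 (hpart.2.1 k l hne) hk hl

lemma eq_of_mem_chainCellsOf (hpart : IsDiagChainPartition P s c) {k l : Fin s} {e : Cell}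
    (hk : e ∈ chainCellsOf c k) (hl : e ∈ chainCellsOf c l) : k = l := by
  have hk' := mem_chainCells.1 hk
  have hl' := mem_chainCells.1 hl
  exact hpart.eq_of_mem_chainVertsOf (v := (e.1, e.2 + 1))
    (mem_chainVerts.2 (by dsimp only; omega)) (mem_chainVerts.2 (by dsimp only; omega))

lemma level_mono (hpart : IsDiagChainPartition P s c) {k l : Fin s} (hkl : k ≤ l) :
    (c k).1 + (c k).2.1 + (c k).2.2 ≤ (c l).1 + (c l).2.1 + (c l).2.2 := by
  rcases hkl.eq_or_lt with rfl | hlt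
  · exact le_rfl
  · rcases hpart.2.2.2 k l hlt with h | ⟨h, -⟩ <;> omega

lemma chainUnion_subset (hpart : IsDiagChainPartition P s c) (p : Fin s → Prop)
    [DecidablePred p] : chainUnion c p ⊆ P := by
  intro e he
  obtain ⟨k, -, hk⟩ := Finset.mem_biUnion.1 he
  exact (hpart.1 k).mem_of_mem_chainCells hk

lemma mem_chainUnion_iff (hpart : IsDiagChainPartition P s c) {p : Fin s → Prop}
    [DecidablePred p] {k : Fin s} {e : Cell} (he : e ∈ chainCellsOf c k) :
    e ∈ chainUnion c p ↔ p k := by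
  simp only [chainUnion, Finset.mem_biUnion, Finset.mem_filter, Finset.mem_univ, true_and]
  exact ⟨fun ⟨l, hl, hel⟩ => hpart.eq_of_mem_chainCellsOf hel he ▸ hl, fun hk => ⟨k, hk, he⟩⟩

lemma exists_not_of_not_isInnerInterval (hpart : IsDiagChainPartition P s c)
    {p : Fin s → Prop} [DecidablePred p] {u w : ℕ × ℕ} (hR : IsInnerInterval P u w)
    (hp : ¬ IsInnerInterval (chainUnion c p) u w) :
    ∃ k e, CellInInterval u w e ∧ e ∈ chainCellsOf c k ∧ ¬ p k := by
  obtain ⟨e, he, hep⟩ : ∃ e, CellInInterval u w e ∧ e ∉ chainUnion c p := by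
    by_contra! h
    exact hp ⟨hR.1, hR.2.1, h⟩
  obtain ⟨k, hk⟩ := hpart.exists_mem_chainCellsOf (hR.2.2 e he)
  exact ⟨k, e, he, hk, fun hpk => hep ((hpart.mem_chainUnion_iff hk).2 hpk)⟩

end IsDiagChainPartition

lemma exists_cellInInterval_level {u w : ℕ × ℕ} {e₁ e₂ : Cell} (h₁ : CellInInterval u w e₁)
    (h₂ : CellInInterval u w e₂) {t : ℕ} (ht₁ : e₁.1 + e₁.2 ≤ t) (ht₂ : t ≤ e₂.1 + e₂.2) :
    ∃ e, CellInInterval u w e ∧ e.1 + e.2 = t := by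
  unfold CellInInterval at *
  refine ⟨(max u.1 (t + 1 - w.2), t - max u.1 (t + 1 - w.2)), ⟨?_, ?_, ?_, ?_⟩, ?_⟩ <;>
    dsimp only <;> omega

section Straddle

variable {Q Q' : Finset Cell} {s : ℕ} {c : Fin s → ℕ × ℕ × ℕ}

lemma exists_cellInInterval_first (hQ : IsParallelogram Q) (hQ' : IsParallelogram Q')
    (hsub : Q' ⊆ Q) (hpart : IsDiagChainPartition (Q \ Q') s c) {a : Fin s}
    (ha : (chainVertsOf c a ∩ vertexSet Q').Nonempty)
    (hfirst : ∀ k, (chainVertsOf c k ∩ vertexSet Q').Nonempty → a ≤ k) {u w : ℕ × ℕ}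
    (hR : IsInnerInterval (Q \ Q') u w) {k₁ k₂ : Fin s} {e₁ e₂ : Cell}
    (h₁ : CellInInterval u w e₁) (h₂ : CellInInterval u w e₂) (hc₁ : e₁ ∈ chainCellsOf c k₁)
    (hc₂ : e₂ ∈ chainCellsOf c k₂) (hk₁ : k₁ ≤ a) (hk₂ : a ≤ k₂) :
    ∃ e, CellInInterval u w e ∧ e ∈ chainCellsOf c a := by
  rcases hk₁.eq_or_lt with rfl | hlt
  · exact ⟨e₁, h₁, hc₁⟩
  obtain ⟨q₁, hq₁, hmin⟩ : ∃ q ∈ Q', ∀ g ∈ Q', q.1 + q.2 ≤ g.1 + g.2 :=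
    Q'.exists_min_image _ hQ'.1.1
  obtain ⟨q₂, hq₂, hmax⟩ : ∃ q ∈ Q', ∀ g ∈ Q', g.1 + g.2 ≤ q.1 + q.2 :=
    Q'.exists_max_image _ hQ'.1.1
  have hlvl₁ := (mem_chainCells.1 hc₁).2.2
  have hlvl₂ := (mem_chainCells.1 hc₂).2.2
  have hbounds := level_bounds_of_meets ha hmin hmax
  have hmono₁ := hpart.level_mono hlt.le
  have hmono₂ := hpart.level_mono hk₂
  -- the chain of `e₁` misses `V(Q')`, so it lies more than one step below `Q'`
  have hlow : e₁.1 + e₁.2 + 1 < q₁.1 + q₁.2 := by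
    by_contra! hnear
    exact hlt.not_ge (hfirst k₁ ((hpart.1 k₁).meets_of_level_near hQ hQ' hsub hq₁ hmin hq₂ hmax
      hc₁ hnear (by omega)))
  obtain ⟨e, he, helvl⟩ :=
    exists_cellInInterval_level h₁ h₂ (t := q₁.1 + q₁.2 - 1) (by omega) (by omega)
  obtain ⟨g, hg⟩ := hpart.exists_mem_chainCellsOf (hR.2.2 e he)
  have hq₁g := (hpart.1 g).mem_chainVerts_of_min_level hQ hsub hmin hg (by omega) hq₁ rfl
  have hag := hfirst g ⟨q₁, Finset.mem_inter.2
    ⟨hq₁g, mem_vertexSet_iff.2 ⟨q₁, hq₁, Or.inl rfl, Or.inl rfl⟩⟩⟩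
  have hmono₃ := hpart.level_mono hag
  have hglvl := (mem_chainCells.1 hg).2.2
  obtain ⟨v, hv⟩ := ha
  obtain ⟨hva, hvQ'⟩ := Finset.mem_inter.1 hv
  have hvlvl := (mem_chainVerts.1 hva).2.2
  have hvq : v ∈ Q' := mem_of_mem_vertexSet_of_le_level hmin hvQ' (by omega)
  have hvg := (hpart.1 g).mem_chainVerts_of_min_level hQ hsub hmin hg (by omega) hvq (by omega)
  obtain rfl := hpart.eq_of_mem_chainVertsOf hva hvg
  exact ⟨e, he, hg⟩

lemma exists_cellInInterval_last (hQ : IsParallelogram Q) (hQ' : IsParallelogram Q')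
    (hsub : Q' ⊆ Q) (hpart : IsDiagChainPartition (Q \ Q') s c) {b : Fin s}
    (hb : (chainVertsOf c b ∩ vertexSet Q').Nonempty)
    (hlast : ∀ k, (chainVertsOf c k ∩ vertexSet Q').Nonempty → k ≤ b) {u w : ℕ × ℕ}
    (hR : IsInnerInterval (Q \ Q') u w) {k₁ k₂ : Fin s} {e₁ e₂ : Cell}
    (h₁ : CellInInterval u w e₁) (h₂ : CellInInterval u w e₂) (hc₁ : e₁ ∈ chainCellsOf c k₁)
    (hc₂ : e₂ ∈ chainCellsOf c k₂) (hk₁ : k₁ ≤ b) (hk₂ : b ≤ k₂) :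
    ∃ e, CellInInterval u w e ∧ e ∈ chainCellsOf c b := by
  rcases hk₂.eq_or_lt with rfl | hlt
  · exact ⟨e₂, h₂, hc₂⟩
  obtain ⟨q₁, hq₁, hmin⟩ : ∃ q ∈ Q', ∀ g ∈ Q', q.1 + q.2 ≤ g.1 + g.2 :=
    Q'.exists_min_image _ hQ'.1.1
  obtain ⟨q₂, hq₂, hmax⟩ : ∃ q ∈ Q', ∀ g ∈ Q', g.1 + g.2 ≤ q.1 + q.2 :=
    Q'.exists_max_image _ hQ'.1.1
  have hlvl₁ := (mem_chainCells.1 hc₁).2.2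
  have hlvl₂ := (mem_chainCells.1 hc₂).2.2
  have hbounds := level_bounds_of_meets hb hmin hmax
  have hmono₁ := hpart.level_mono hk₁
  have hmono₂ := hpart.level_mono hlt.le
  have hhigh : q₂.1 + q₂.2 + 1 < e₂.1 + e₂.2 := by
    by_contra! hnear
    exact hlt.not_ge (hlast k₂ ((hpart.1 k₂).meets_of_level_near hQ hQ' hsub hq₁ hmin hq₂ hmax
      hc₂ (by omega) hnear))
  obtain ⟨e, he, helvl⟩ :=
    exists_cellInInterval_level h₁ h₂ (t := q₂.1 + q₂.2 + 1) (by omega) (by omega)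
  obtain ⟨g, hg⟩ := hpart.exists_mem_chainCellsOf (hR.2.2 e he)
  have hq₂g := (hpart.1 g).mem_chainVerts_of_max_level hQ hsub hmax hg (by omega) hq₂ rfl
  have hgb := hlast g ⟨(q₂.1 + 1, q₂.2 + 1), Finset.mem_inter.2
    ⟨hq₂g, mem_vertexSet_iff.2 ⟨q₂, hq₂, Or.inr rfl, Or.inr rfl⟩⟩⟩
  have hmono₃ := hpart.level_mono hgb
  have hglvl := (mem_chainCells.1 hg).2.2
  obtain ⟨v, hv⟩ := hb
  obtain ⟨hvb, hvQ'⟩ := Finset.mem_inter.1 hv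
  have hvlvl := (mem_chainVerts.1 hvb).2.2
  obtain ⟨q, hq, hqlvl, rfl⟩ := exists_mem_of_mem_vertexSet_of_level_le hmax hvQ' (by omega)
  have hvg := (hpart.1 g).mem_chainVerts_of_max_level hQ hsub hmax hg (by omega) hq hqlvl
  obtain rfl := hpart.eq_of_mem_chainVertsOf hvb hvg
  exact ⟨e, he, hg⟩

end Straddle

lemma IsInnerInterval.mono {R R' : Finset Cell} (h : R ⊆ R') {u w : ℕ × ℕ}
    (hR : IsInnerInterval R u w) : IsInnerInterval R' u w :=
  ⟨hR.1, hR.2.1, fun e he => h (hR.2.2 e he)⟩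

lemma IsInnerInterval.corners_mem_vertexSet {P : Finset Cell} {u w : ℕ × ℕ}
    (hR : IsInnerInterval P u w) :
    u ∈ vertexSet P ∧ w ∈ vertexSet P ∧ (u.1, w.2) ∈ vertexSet P ∧ (w.1, u.2) ∈ vertexSet P := by
  obtain ⟨h1, h2, hcells⟩ := hR
  have hll := hcells (u.1, u.2) ⟨le_rfl, h1, le_rfl, h2⟩
  have hur := hcells (w.1 - 1, w.2 - 1) ⟨by omega, by omega, by omega, by omega⟩
  have hul := hcells (u.1, w.2 - 1) ⟨le_rfl, h1, by omega, by omega⟩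
  have hlr := hcells (w.1 - 1, u.2) ⟨by omega, by omega, le_rfl, h2⟩
  refine ⟨mem_vertexSet_iff.2 ⟨_, hll, Or.inl rfl, Or.inl rfl⟩,
    mem_vertexSet_iff.2 ⟨_, hur, Or.inr ?_, Or.inr ?_⟩,
    mem_vertexSet_iff.2 ⟨_, hul, Or.inl rfl, Or.inr ?_⟩,
    mem_vertexSet_iff.2 ⟨_, hlr, Or.inr ?_, Or.inl rfl⟩⟩ <;> dsimp only <;> omega

section Binomials

variable {K : Type*} [Field K] {P R R₁ R₂ : Finset Cell}

lemma cellsIdeal_mono (h : R₁ ⊆ R₂) : cellsIdeal K P R₁ ≤ cellsIdeal K P R₂ :=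
  Ideal.span_mono fun _ ⟨a, b, c, d, hab, hc, hd, hf⟩ => ⟨a, b, c, d, hab.mono h, hc, hd, hf⟩

/-- Evaluating at the indicator function of `{u, w}` kills the inner 2-minor of every inner
interval other than `[u, w]`. -/
noncomputable def diagonalIndicator (K : Type*) [Field K] (P : Finset Cell) (u w : ℕ × ℕ) :
    {v : ℕ × ℕ // v ∈ vertexSet P} → K :=
  fun v => if (v : ℕ × ℕ) = u ∨ (v : ℕ × ℕ) = w then 1 else 0

lemma cellsIdeal_le_ker_eval_diagonalIndicator {u w : ℕ × ℕ} (hu : u.1 < w.1) (hw : u.2 < w.2)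
    (hR : ¬ IsInnerInterval R u w) :
    cellsIdeal K P R ≤ RingHom.ker (MvPolynomial.eval (diagonalIndicator K P u w)) := by
  refine Ideal.span_le.2 ?_
  rintro _ ⟨⟨a, ha⟩, ⟨b, hb⟩, ⟨c, hc⟩, ⟨d, hd⟩, hab, rfl, rfl, rfl⟩
  have hne : ¬ (a = u ∧ b = w) := fun ⟨h1, h2⟩ => hR (h1 ▸ h2 ▸ hab)
  obtain ⟨h1, h2, -⟩ := hab
  dsimp only at h1 h2
  have hdiag : ¬ ((a = u ∨ a = w) ∧ (b = u ∨ b = w)) := by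
    simp only [Prod.ext_iff] at hne ⊢
    omega
  have hanti : ¬ (((a.1, b.2) = u ∨ (a.1, b.2) = w) ∧ ((b.1, a.2) = u ∨ (b.1, a.2) = w)) := by
    simp only [Prod.ext_iff]
    omega
  simp only [SetLike.mem_coe, RingHom.mem_ker, map_sub, map_mul, MvPolynomial.eval_X,
    diagonalIndicator, ite_zero_mul_ite_zero, if_neg hdiag, if_neg hanti, sub_zero]

lemma cellsIdeal_add_eq_polyominoIdeal_iff (h₁ : R₁ ⊆ P) (h₂ : R₂ ⊆ P) :
    cellsIdeal K P R₁ + cellsIdeal K P R₂ = polyominoIdeal K P ↔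
      ∀ u w, IsInnerInterval P u w → IsInnerInterval R₁ u w ∨ IsInnerInterval R₂ u w := by
  constructor
  · intro heq u w hR
    by_contra! hnot
    obtain ⟨hu, hw, hc, hd⟩ := hR.corners_mem_vertexSet
    have hmem : (X ⟨u, hu⟩ * X ⟨w, hw⟩ - X ⟨(u.1, w.2), hc⟩ * X ⟨(w.1, u.2), hd⟩ : PolyRing K P) ∈
        cellsIdeal K P R₁ ⊔ cellsIdeal K P R₂ := by
      rw [← Submodule.add_eq_sup, heq]
      exact Ideal.subset_span
        ⟨⟨u, hu⟩, ⟨w, hw⟩, ⟨(u.1, w.2), hc⟩, ⟨(w.1, u.2), hd⟩, hR, rfl, rfl, rfl⟩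
    have hker := sup_le (cellsIdeal_le_ker_eval_diagonalIndicator hR.1 hR.2.1 hnot.1)
      (cellsIdeal_le_ker_eval_diagonalIndicator hR.1 hR.2.1 hnot.2) hmem
    have hanti : ¬ (((u.1, w.2) = u ∨ (u.1, w.2) = w) ∧ ((w.1, u.2) = u ∨ (w.1, u.2) = w)) := by
      have := hR.1
      have := hR.2.1
      simp only [Prod.ext_iff]
      omega
    simp only [RingHom.mem_ker, map_sub, map_mul, MvPolynomial.eval_X, diagonalIndicator,
      ite_zero_mul_ite_zero, if_neg hanti, true_or, or_true, if_true, mul_one,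
      sub_zero, one_ne_zero] at hker
  · intro hsplit
    refine le_antisymm (sup_le (cellsIdeal_mono h₁) (cellsIdeal_mono h₂)) (Ideal.span_le.2 ?_)
    rintro _ ⟨a, b, c, d, hab, hc, hd, rfl⟩
    rcases hsplit _ _ hab with h | h
    · exact Ideal.mem_sup_left (Ideal.subset_span ⟨a, b, c, d, h, hc, hd, rfl⟩)
    · exact Ideal.mem_sup_right (Ideal.subset_span ⟨a, b, c, d, h, hc, hd, rfl⟩)

end Binomials

/-- In the situation of removing a parallelogram sub-polyomino `Q'`
from a parallelogram polyomino `Q`, `I_{Q₁} + I_{Q₂} = I_P` holds if and only if no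
inner interval of `P` contains both a cell of `𝒞_a` and a cell of `𝒞_b`. -/
theorem parallelogramMinusParallelogram_sum_iff (K : Type*) [Field K]
    (Q Q' : Finset Cell) (hQ : IsParallelogram Q) (hQ' : IsParallelogram Q')
    (hsub : Q' ⊆ Q)
    (s : ℕ) (c : Fin s → ℕ × ℕ × ℕ)
    (hpart : IsDiagChainPartition (Q \ Q') s c)
    (a b : Fin s)
    (ha : (chainVerts (c a).1 (c a).2.1 (c a).2.2 ∩ vertexSet Q').Nonempty)
    (hb : (chainVerts (c b).1 (c b).2.1 (c b).2.2 ∩ vertexSet Q').Nonempty)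
    (hab : ∀ k : Fin s,
      (chainVerts (c k).1 (c k).2.1 (c k).2.2 ∩ vertexSet Q').Nonempty →
        a ≤ k ∧ k ≤ b) :
    (cellsIdeal K (Q \ Q')
          ((Finset.univ.filter (fun k : Fin s => k < b)).biUnion
            fun k => chainCells (c k).1 (c k).2.1 (c k).2.2) +
        cellsIdeal K (Q \ Q')
          ((Finset.univ.filter (fun k : Fin s => a < k)).biUnion
            fun k => chainCells (c k).1 (c k).2.1 (c k).2.2) =
      polyominoIdeal K (Q \ Q')) ↔
    ¬ ∃ (u w : ℕ × ℕ) (c₁ c₂ : Cell), IsInnerInterval (Q \ Q') u w ∧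
        c₁ ∈ chainCells (c a).1 (c a).2.1 (c a).2.2 ∧
        c₂ ∈ chainCells (c b).1 (c b).2.1 (c b).2.2 ∧
        CellInInterval u w c₁ ∧ CellInInterval u w c₂ := by
  refine (cellsIdeal_add_eq_polyominoIdeal_iff (hpart.chainUnion_subset (· < b))
    (hpart.chainUnion_subset (a < ·))).trans ⟨?_, ?_⟩
  · rintro hsplit ⟨u, w, c₁, c₂, hR, hc₁, hc₂, h₁, h₂⟩
    rcases hsplit u w hR with hR₁ | hR₂
    · exact absurd ((hpart.mem_chainUnion_iff hc₂).1 (hR₁.2.2 c₂ h₂)) (lt_irrefl b)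
    · exact absurd ((hpart.mem_chainUnion_iff hc₁).1 (hR₂.2.2 c₁ h₁)) (lt_irrefl a)
  · intro hno u w hR
    by_contra! hnot
    obtain ⟨k₂, e₂, h₂, hc₂, hk₂⟩ := hpart.exists_not_of_not_isInnerInterval hR hnot.1
    obtain ⟨k₁, e₁, h₁, hc₁, hk₁⟩ := hpart.exists_not_of_not_isInnerInterval hR hnot.2
    rw [not_lt] at hk₁ hk₂
    have hle : a ≤ b := (hab a ha).2
    obtain ⟨c₁, h₁', hc₁'⟩ := exists_cellInInterval_first hQ hQ' hsub hpart ha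
      (fun k hk => (hab k hk).1) hR h₁ h₂ hc₁ hc₂ hk₁ (hle.trans hk₂)
    obtain ⟨c₂, h₂', hc₂'⟩ := exists_cellInInterval_last hQ hQ' hsub hpart hb
      (fun k hk => (hab k hk).2) hR h₁ h₂ hc₁ hc₂ (hk₁.trans hle) hk₂
    exact hno ⟨u, w, c₁, c₂, hR, hc₁', hc₂', h₁', h₂'⟩
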